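/- arXiv:1112.4062 — 2 statements merged into one kernel-verified Lean document; each statement's English description precedes it below -/
import Mathlib

section
/- If R is a real closed field, then its value group under the natural valuation is divisible: for every value g and every nonzero n ∈ ℕ there exists h with h^n = g. -/
/-! An `n`-th root `h` of `|g|` satisfies `|h ^ n| = |g|`, so `h ^ n` and `g` are Archimedean
equivalent. Such roots exist in a real closed field: for odd `n` as a root of `X ^ n - C |g|`, and
for `n = 2 m` as an `m`-th root of the (nonnegative) square root of `|g|`. -/

/-- A real closed field: every nonnegative element is a square and every odd degree
polynomial has a root. -/
def IsRealClosedF (R : Type*) [Field R] [LinearOrder R] [IsStrictOrderedRing R] : Prop :=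
  (∀ x : R, 0 ≤ x → ∃ y : R, y ^ 2 = x) ∧
  (∀ p : Polynomial R, Odd p.natDegree → ∃ x : R, p.IsRoot x)

/-- Archimedean equivalence, i.e. equality of natural-valuation values. -/
def ArchEquiv {R : Type*} [Field R] [LinearOrder R] [IsStrictOrderedRing R] (x y : R) : Prop :=
  ∃ n : ℕ, |y| ≤ (n : R) * |x| ∧ |x| ≤ (n : R) * |y|

section

variable {R : Type*} [Field R] [LinearOrder R] [IsStrictOrderedRing R]

theorem ArchEquiv.of_abs_eq {x y : R} (h : |x| = |y|) : ArchEquiv x y :=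
  ⟨1, by simp [h], by simp [h]⟩

namespace IsRealClosedF

theorem exists_pow_eq_of_odd (hRC : IsRealClosedF R) {n : ℕ} (hn : Odd n) (x : R) :
    ∃ y : R, y ^ n = x := by
  obtain ⟨y, hy⟩ := hRC.2 (Polynomial.X ^ n - Polynomial.C x)
    (by rwa [Polynomial.natDegree_X_pow_sub_C])
  exact ⟨y, by simpa [sub_eq_zero] using hy⟩

theorem exists_pow_eq (hRC : IsRealClosedF R) {n : ℕ} (hn : n ≠ 0) {x : R} (hx : 0 ≤ x) :
    ∃ y : R, y ^ n = x := by
  induction n using Nat.strong_induction_on generalizing x with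
  | _ n ih =>
  rcases Nat.even_or_odd' n with ⟨m, rfl | rfl⟩
  · obtain ⟨s, rfl⟩ := hRC.1 x hx
    obtain ⟨y, hy⟩ := ih m (by omega) (by omega) (abs_nonneg s)
    exact ⟨y, by rw [pow_mul', hy, sq_abs]⟩
  · exact hRC.exists_pow_eq_of_odd (odd_two_mul_add_one m) x

end IsRealClosedF

end

/-- The value group of a real closed field under the natural valuation is divisible:
for every value `v g` (`g ≠ 0`) and nonzero `n` there is `h` with `(v h)^n = v g`. -/
theorem stmt5 {R : Type*} [Field R] [LinearOrder R] [IsStrictOrderedRing R] (hRC : IsRealClosedF R) :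
    ∀ g : R, g ≠ 0 → ∀ n : ℕ, n ≠ 0 → ∃ h : R, h ≠ 0 ∧ ArchEquiv (h ^ n) g := by
  intro g hg n hn
  obtain ⟨h, hh⟩ := hRC.exists_pow_eq hn (abs_nonneg g)
  refine ⟨h, ne_zero_pow hn (hh ▸ abs_ne_zero.mpr hg), ArchEquiv.of_abs_eq ?_⟩
  rw [hh, abs_abs]
end

section
/- Let F be a truncation-closed subfield of k((G)), where k is an Archimedean ordered subfield of ℝ containing ℚ and G is an ordered abelian group. Let Z_F be the set of elements of the form t + z where t ∈ F ∩ k((G^{>1})) and z ∈ ℤ. Then Z_F is an integer part of F: it is a discretely ordered subring and for every s ∈ F there is w ∈ Z_F with w ≤ s < w + 1. -/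
/- We model `k((G))` by `HahnSeries Γ K` where `Γ` is the order-reversed additive copy of the
ordered abelian group `G`.  Under this correspondence `s.order` is the `G`-maximum of the
support, `G^{>1}` corresponds to `{γ : Γ | γ < 0}`, and the truncation `s_{<h}` (an initial
segment of the series, keeping the `G`-largest monomials) keeps the exponents `γ < c`. -/

/-- Truncation of a Hahn series: keep the part of the support below `c`
(the initial segment / leading part of the series). -/
noncomputable def trunc {Γ k : Type*} [AddCommGroup Γ] [LinearOrder Γ] [IsOrderedAddMonoid Γ]
    [Field k] [LinearOrder k] [IsStrictOrderedRing k]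
    (s : HahnSeries Γ k) (c : Γ) : HahnSeries Γ k where
  coeff γ := if γ < c then s.coeff γ else 0
  isPWO_support' := s.isPWO_support.mono (by
    intro γ hγ
    simp only [Function.mem_support] at hγ ⊢
    intro h
    apply hγ
    split_ifs <;> simp [h])

/-- Positivity in `k((G))`: the leading coefficient (at the `G`-maximum of the support,
i.e. at `s.order`) is positive. -/
def hpos {Γ k : Type*} [AddCommGroup Γ] [LinearOrder Γ] [IsOrderedAddMonoid Γ]
    [Field k] [LinearOrder k] [IsStrictOrderedRing k]
    (s : HahnSeries Γ k) : Prop :=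
  0 < s.coeff s.order

/-- The order on `k((G))`. -/
def hlt {Γ k : Type*} [AddCommGroup Γ] [LinearOrder Γ] [IsOrderedAddMonoid Γ]
    [Field k] [LinearOrder k] [IsStrictOrderedRing k]
    (s t : HahnSeries Γ k) : Prop :=
  hpos (t - s)

def hle {Γ k : Type*} [AddCommGroup Γ] [LinearOrder Γ] [IsOrderedAddMonoid Γ]
    [Field k] [LinearOrder k] [IsStrictOrderedRing k]
    (s t : HahnSeries Γ k) : Prop :=
  s = t ∨ hlt s t

/-- The truncation integer part `Z_F = (F ∩ k((G^{>1}))) + ℤ` of a truncation-closed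
subfield `F`. -/
def ZF {Γ k : Type*} [AddCommGroup Γ] [LinearOrder Γ] [IsOrderedAddMonoid Γ]
    [Field k] [LinearOrder k] [IsStrictOrderedRing k]
    (F : Set (HahnSeries Γ k)) : Set (HahnSeries Γ k) :=
  {w | ∃ t ∈ F, (∀ γ ∈ t.support, γ < 0) ∧ ∃ z : ℤ, w = t + (z : HahnSeries Γ k)}

/- Write `s ∈ F` as `trunc s 0 + a + ε` with `trunc s 0 ∈ F` purely infinite, `a = s.coeff 0 ∈ k`
and `ε` infinitesimal. Then `trunc s 0 + ⌊a⌋`, lowered by one when the remainder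
`s - (trunc s 0 + ⌊a⌋)` is negative, is an integer part of `s`. Discreteness holds because for
`u` purely infinite and nonzero, `u + m` has the sign of `u` for every `m ∈ ℤ`, so `u + m` and
`1 - (u + m)` cannot both be positive. -/

namespace HahnSeries

section PurelyInfinite

variable (Γ R : Type*) [AddCommGroup Γ] [LinearOrder Γ] [IsOrderedAddMonoid Γ] [Ring R]

def purelyInfinite : NonUnitalSubring (HahnSeries Γ R) where
  carrier := {t | ∀ γ ∈ t.support, γ < 0}
  zero_mem' := by simp
  add_mem' {t t'} ht ht' γ hγ := (support_add_subset (x := t) (y := t') hγ).elim (ht γ) (ht' γ)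
  neg_mem' {t} ht γ hγ := ht γ (support_neg_subset t hγ)
  mul_mem' {t t'} ht ht' γ hγ := by
    obtain ⟨γ₁, h₁, γ₂, h₂, rfl⟩ := support_mul_subset hγ
    exact add_neg (ht γ₁ h₁) (ht' γ₂ h₂)

variable {Γ R}

theorem mem_purelyInfinite {t : HahnSeries Γ R} :
    t ∈ purelyInfinite Γ R ↔ ∀ γ ∈ t.support, γ < 0 := by
  rfl

theorem orderTop_lt_orderTop_intCast {u : HahnSeries Γ R} (hu : u ∈ purelyInfinite Γ R)
    (hu0 : u ≠ 0) (m : ℤ) : u.orderTop < (m : HahnSeries Γ R).orderTop := by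
  obtain ⟨γ, hγ⟩ := support_nonempty_iff.2 hu0
  rw [← single_zero_intCast]
  exact orderTop_lt_iff_exists.2 ⟨γ, lt_orderTop_single (mem_purelyInfinite.1 hu γ hγ), hγ⟩

end PurelyInfinite

variable {Γ k : Type*} [AddCommGroup Γ] [LinearOrder Γ] [IsOrderedAddMonoid Γ]
  [Field k] [LinearOrder k] [IsStrictOrderedRing k]

theorem hpos_iff_leadingCoeff_pos {x : HahnSeries Γ k} : hpos x ↔ 0 < x.leadingCoeff := by
  rw [hpos, leadingCoeff_eq]

theorem hpos_of_coeff_pos {x : HahnSeries Γ k} {c : Γ} (hlow : ∀ γ < c, x.coeff γ = 0)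
    (hc : 0 < x.coeff c) : hpos x := by
  have hx : x ≠ 0 := by rintro rfl; exact hc.ne' coeff_zero
  have hord : x.order = c :=
    le_antisymm (order_le_of_coeff_ne_zero hc.ne') ((le_order_iff_forall hx).2 hlow)
  rwa [hpos, hord]

theorem hpos_one_add {ε : HahnSeries Γ k} (hlow : ∀ γ < 0, ε.coeff γ = 0)
    (h0 : -1 < ε.coeff 0) : hpos (1 + ε) :=
  hpos_of_coeff_pos (c := 0) (fun γ hγ => by simp [coeff_one, hγ.ne, hlow γ hγ])
    (by simpa [coeff_one] using neg_lt_iff_pos_add'.1 h0)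

theorem hpos_intCast_iff {z : ℤ} : hpos (z : HahnSeries Γ k) ↔ 0 < z := by
  rw [hpos_iff_leadingCoeff_pos, ← single_zero_intCast, leadingCoeff_of_single, Int.cast_pos]

theorem hpos_add_iff_of_orderTop_lt {x y : HahnSeries Γ k} (h : x.orderTop < y.orderTop) :
    hpos (x + y) ↔ hpos x := by
  rw [hpos_iff_leadingCoeff_pos, hpos_iff_leadingCoeff_pos, leadingCoeff_add_eq_left h]

theorem not_hpos_and_hpos_neg (x : HahnSeries Γ k) : ¬ (hpos x ∧ hpos (-x)) := by
  rw [hpos_iff_leadingCoeff_pos, hpos_iff_leadingCoeff_pos, leadingCoeff_neg, neg_pos]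
  exact fun h => lt_asymm h.1 h.2

theorem eq_zero_or_hpos_or_hpos_neg (x : HahnSeries Γ k) : x = 0 ∨ hpos x ∨ hpos (-x) := by
  rw [hpos_iff_leadingCoeff_pos, hpos_iff_leadingCoeff_pos, leadingCoeff_neg, neg_pos,
    ← leadingCoeff_eq_zero]
  rcases lt_trichotomy x.leadingCoeff 0 with h | h | h <;> simp [h]

theorem mem_ZF {F : Set (HahnSeries Γ k)} {w : HahnSeries Γ k} :
    w ∈ ZF F ↔ ∃ t ∈ F, t ∈ purelyInfinite Γ k ∧ ∃ z : ℤ, w = t + z := by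
  rfl

def integerPart (F : Subring (HahnSeries Γ k)) : Subring (HahnSeries Γ k) where
  carrier := ZF F
  zero_mem' := mem_ZF.2 ⟨0, F.zero_mem, zero_mem _, 0, by simp⟩
  one_mem' := mem_ZF.2 ⟨0, F.zero_mem, zero_mem _, 1, by simp⟩
  add_mem' {w w'} hw hw' := by
    obtain ⟨t, htF, ht, z, rfl⟩ := mem_ZF.1 hw
    obtain ⟨t', htF', ht', z', rfl⟩ := mem_ZF.1 hw'
    exact mem_ZF.2 ⟨t + t', add_mem htF htF', add_mem ht ht', z + z', by push_cast; ring⟩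
  mul_mem' {w w'} hw hw' := by
    obtain ⟨t, htF, ht, z, rfl⟩ := mem_ZF.1 hw
    obtain ⟨t', htF', ht', z', rfl⟩ := mem_ZF.1 hw'
    refine mem_ZF.2 ⟨t * t' + z • t' + z' • t, ?_, ?_, z * z', ?_⟩
    · exact add_mem (add_mem (mul_mem htF htF') (zsmul_mem htF' z)) (zsmul_mem htF z')
    · exact add_mem (add_mem (mul_mem ht ht') (zsmul_mem ht' z)) (zsmul_mem ht z')
    · simp only [zsmul_eq_mul]; push_cast; ring
  neg_mem' {w} hw := by
    obtain ⟨t, htF, ht, z, rfl⟩ := mem_ZF.1 hw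
    exact mem_ZF.2 ⟨-t, neg_mem htF, neg_mem ht, -z, by push_cast; ring⟩

theorem not_hpos_and_hpos_one_sub {u : HahnSeries Γ k} (hu : u ∈ purelyInfinite Γ k) (m : ℤ) :
    ¬ (hpos (u + (m : HahnSeries Γ k)) ∧ hpos (1 - (u + (m : HahnSeries Γ k)))) := by
  rintro ⟨h₁, h₂⟩
  have h₂' : hpos (-u + ((1 - m : ℤ) : HahnSeries Γ k)) := by
    convert h₂ using 1; push_cast; ring
  by_cases hu0 : u = 0
  · subst hu0
    rw [zero_add, hpos_intCast_iff] at h₁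
    rw [neg_zero, zero_add, hpos_intCast_iff] at h₂'
    omega
  · rw [hpos_add_iff_of_orderTop_lt (orderTop_lt_orderTop_intCast hu hu0 m)] at h₁
    rw [hpos_add_iff_of_orderTop_lt
      (orderTop_lt_orderTop_intCast (neg_mem hu) (neg_ne_zero.2 hu0) _)] at h₂'
    exact not_hpos_and_hpos_neg u ⟨h₁, h₂'⟩

theorem not_hlt_and_hlt_add_one_of_mem_ZF {F : Set (HahnSeries Γ k)} {w w' : HahnSeries Γ k}
    (hw : w ∈ ZF F) (hw' : w' ∈ ZF F) : ¬ (hlt w w' ∧ hlt w' (w + 1)) := by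
  obtain ⟨t, -, ht, z, rfl⟩ := mem_ZF.1 hw
  obtain ⟨t', -, ht', z', rfl⟩ := mem_ZF.1 hw'
  have hdiff : t' + z' - (t + z) = (t' - t) + ((z' - z : ℤ) : HahnSeries Γ k) := by
    push_cast; ring
  have hdiff' : t + z + 1 - (t' + z') = 1 - ((t' - t) + ((z' - z : ℤ) : HahnSeries Γ k)) := by
    push_cast; ring
  rw [hlt, hlt, hdiff, hdiff']
  exact not_hpos_and_hpos_one_sub (sub_mem ht' ht) _

theorem coeff_trunc (s : HahnSeries Γ k) (c γ : Γ) :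
    (trunc s c).coeff γ = if γ < c then s.coeff γ else 0 :=
  rfl

theorem trunc_zero_mem_purelyInfinite (s : HahnSeries Γ k) : trunc s 0 ∈ purelyInfinite Γ k :=
  mem_purelyInfinite.2 fun γ hγ => by
    by_contra h
    exact hγ (by simp [coeff_trunc, h])

theorem coeff_sub_trunc_zero_add_intCast_of_neg (s : HahnSeries Γ k) (z : ℤ) {γ : Γ}
    (hγ : γ < 0) : (s - (trunc s 0 + z)).coeff γ = 0 := by
  simp [coeff_trunc, hγ, ← single_zero_intCast, coeff_single_of_ne hγ.ne]

theorem coeff_sub_trunc_zero_add_intCast_zero (s : HahnSeries Γ k) (z : ℤ) :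
    (s - (trunc s 0 + z)).coeff 0 = s.coeff 0 - z := by
  simp [coeff_trunc, ← single_zero_intCast]

theorem exists_mem_ZF_hle_hlt_add_one [FloorRing k] {F : Set (HahnSeries Γ k)}
    (hF : ∀ s ∈ F, ∀ c : Γ, trunc s c ∈ F) {s : HahnSeries Γ k} (hs : s ∈ F) :
    ∃ w ∈ ZF F, hle w s ∧ hlt s (w + 1) := by
  set t := trunc s 0
  set n := ⌊s.coeff 0⌋
  set ε := s - (t + n)
  have hlow : ∀ γ < 0, ε.coeff γ = 0 := fun γ => coeff_sub_trunc_zero_add_intCast_of_neg s n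
  have h0 : ε.coeff 0 = Int.fract (s.coeff 0) := coeff_sub_trunc_zero_add_intCast_zero s n
  have hmem (z : ℤ) : t + z ∈ ZF F :=
    mem_ZF.2 ⟨t, hF s hs 0, trunc_zero_mem_purelyInfinite s, z, rfl⟩
  by_cases hneg : hpos (-ε)
  · refine ⟨t + (n - 1 : ℤ), hmem _, Or.inr ?_, ?_⟩
    · have hpos_succ : hpos (1 + ε) :=
        hpos_one_add hlow (by rw [h0]; linarith [Int.fract_nonneg (s.coeff 0)])
      rw [hlt]; convert hpos_succ using 1; push_cast; ring
    · rw [hlt]; convert hneg using 1; push_cast; ring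
  · refine ⟨t + n, hmem n, ?_, ?_⟩
    · rcases eq_zero_or_hpos_or_hpos_neg ε with h | h | h
      · exact Or.inl (sub_eq_zero.1 h).symm
      · exact Or.inr h
      · exact absurd h hneg
    · have hpos_pred : hpos (1 + -ε) :=
        hpos_one_add (fun γ hγ => by simp [hlow γ hγ])
          (by rw [coeff_neg, h0, neg_lt_neg_iff]; exact Int.fract_lt_one _)
      rw [hlt]; convert hpos_pred using 1; ring

end HahnSeries

/-- Mourgues–Ressayre: for a truncation-closed subfield `F` of `k((G))`, with `k` an
Archimedean ordered subfield of `ℝ`, the set `Z_F` is a discretely ordered subring of `F`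
which is an integer part of `F`. -/
theorem stmt10 {Γ : Type*} [AddCommGroup Γ] [LinearOrder Γ] [IsOrderedAddMonoid Γ] (K : Subfield ℝ)
    (F : Subfield (HahnSeries Γ K))
    (hF : ∀ s ∈ F, ∀ c : Γ, trunc s c ∈ F) :
    (1 : HahnSeries Γ K) ∈ ZF (F : Set (HahnSeries Γ K)) ∧
    (∀ w ∈ ZF (F : Set (HahnSeries Γ K)), ∀ w' ∈ ZF (F : Set (HahnSeries Γ K)),
      w + w' ∈ ZF (F : Set (HahnSeries Γ K)) ∧ w * w' ∈ ZF (F : Set (HahnSeries Γ K)) ∧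
        -w ∈ ZF (F : Set (HahnSeries Γ K))) ∧
    (∀ w ∈ ZF (F : Set (HahnSeries Γ K)),
      ¬ ∃ w' ∈ ZF (F : Set (HahnSeries Γ K)), hlt w w' ∧ hlt w' (w + 1)) ∧
    (∀ s ∈ F, ∃ w ∈ ZF (F : Set (HahnSeries Γ K)), hle w s ∧ hlt s (w + 1)) := by
  let _ : FloorRing K := Archimedean.floorRing K
  let Z := HahnSeries.integerPart F.toSubring
  refine ⟨Z.one_mem, fun w hw w' hw' => ⟨Z.add_mem hw hw', Z.mul_mem hw hw', Z.neg_mem hw⟩,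
    fun w hw ⟨w', hw', hlt⟩ => HahnSeries.not_hlt_and_hlt_add_one_of_mem_ZF hw hw' hlt,
    fun s hs => HahnSeries.exists_mem_ZF_hle_hlt_add_one hF hs⟩
end
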